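/- arXiv:1605.05764 — 2 statements merged into one kernel-verified Lean document; each statement's English description precedes it below -/
import Mathlib

section
/- Let f(n) → ∞ and φ > 0 be a constant. There exists ζ > 0 such that for p = p(n) ∈ [f(n)/n, 1] and large n, the probability that some set S ⊆ [n] with |S| ≤ ζn satisfies |A[S]| > φ·n·|S|·p in D(n,p) is at most exp(−f(n)²/2). -/
open Finset MeasureTheory Filter
open scoped ENNReal

/-- Index type for the possible arcs of a digraph on `[n]`: ordered pairs of
distinct vertices. -/
abbrev ArcIdx (n : ℕ) := {a : Fin n × Fin n // a.1 ≠ a.2}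

/-- A sample point of the random digraph: which arcs are present. -/
abbrev ArcSpace (n : ℕ) := ArcIdx n → Bool

/-- The law of `D(n,p)`: each of the `n(n-1)` arcs is present independently
with probability `p`. -/
noncomputable def digraphMeasure (n : ℕ) (p : ℝ) : Measure (ArcSpace n) :=
  Measure.pi fun _ =>
    (PMF.bernoulli (min (Real.toNNReal p) 1) (min_le_right _ _)).toMeasure

/-- The arc set of the digraph determined by a sample point. -/
def DigraphOf {n : ℕ} (ω : ArcSpace n) : Finset (Fin n × Fin n) :=
  (Finset.univ.filter fun a : ArcIdx n => ω a = true).image Subtype.val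

/-- In-degree of a vertex in a digraph given by its arc set. -/
def inDegD {V : Type*} [Fintype V] [DecidableEq V] (A : Finset (V × V)) (v : V) : ℕ :=
  (A.filter fun e => e.2 = v).card

/-- Out-degree of a vertex. -/
def outDegD {V : Type*} [Fintype V] [DecidableEq V] (A : Finset (V × V)) (v : V) : ℕ :=
  (A.filter fun e => e.1 = v).card

/-- Minimum in-degree. -/
noncomputable def minInDegD {V : Type*} [Fintype V] [DecidableEq V]
    (A : Finset (V × V)) : ℕ :=
  sInf {d : ℕ | ∃ v : V, inDegD A v = d}

/-- Minimum out-degree. -/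
noncomputable def minOutDegD {V : Type*} [Fintype V] [DecidableEq V]
    (A : Finset (V × V)) : ℕ :=
  sInf {d : ℕ | ∃ v : V, outDegD A v = d}

/-! A first-moment bound. If `|S| = s` and `S` spans more than `φ n s p` arcs, then `S` contains
a fixed set of `k = ⌊φ n s p⌋ + 1` present arcs, so the probability of the event is at most
`∑ₛ C(n, s) C(s², k) pᵏ ≤ ∑ₛ (e n / s)ˢ (e s / (φ n))ᵏ`. As `np ≥ f`, we have `k ≥ φ s f`, and
`k ≤ s²` forces `s ≥ φ f`, which trades `f² / 2` for a multiple of `s f`. Taking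
`ζ = φ e^{-(2 + φ⁻²)}` makes `e s / (φ n) ≤ e^{-(1 + φ⁻²)}`, and then each summand is at most
`exp (-f² / 2 - s)` once `f` is large. -/

namespace Nat

theorem choose_le_exp_one_mul_div_pow (n k : ℕ) :
    (n.choose k : ℝ) ≤ (Real.exp 1 * n / k) ^ k := by
  rcases k.eq_zero_or_pos with rfl | hk
  · simp
  have hk' : (0 : ℝ) < k := mod_cast hk
  calc (n.choose k : ℝ) ≤ (n : ℝ) ^ k / k.factorial := choose_le_pow_div k n
    _ = ((n : ℝ) / k) ^ k * ((k : ℝ) ^ k / k.factorial) := by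
        rw [div_pow]; field_simp
    _ ≤ ((n : ℝ) / k) ^ k * Real.exp k := by
        gcongr; exact Real.pow_div_factorial_le_exp _ k.cast_nonneg k
    _ = (Real.exp 1 * n / k) ^ k := by
        rw [← Real.exp_one_pow, mul_div_assoc, mul_pow, mul_comm]

end Nat

section RandomDigraph

variable {n : ℕ} {p : ℝ}

def arcsWithin (S : Finset (Fin n)) : Finset (ArcIdx n) :=
  {a | a.1.1 ∈ S ∧ a.1.2 ∈ S}

lemma card_arcsWithin_le (S : Finset (Fin n)) : #(arcsWithin S) ≤ #S * #S := by
  rw [← card_product]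
  refine card_le_card_of_injOn Subtype.val (fun a ha => ?_) Subtype.val_injective.injOn
  simpa [arcsWithin] using ha

lemma card_filter_digraphOf (ω : ArcSpace n) (S : Finset (Fin n)) :
    #((DigraphOf ω).filter fun e => e.1 ∈ S ∧ e.2 ∈ S) =
      #((arcsWithin S).filter fun a => ω a = true) := by
  rw [DigraphOf, filter_image, card_image_of_injective _ Subtype.val_injective, arcsWithin,
    filter_filter, filter_filter]
  simp only [and_comm]

lemma digraphMeasure_forall_eq_true (hp : p ≤ 1) (T : Finset (ArcIdx n)) :
    digraphMeasure n p {ω | ∀ a ∈ T, ω a = true} = ENNReal.ofReal p ^ #T := by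
  have hT : {ω : ArcSpace n | ∀ a ∈ T, ω a = true} = (T : Set (ArcIdx n)).pi fun _ => {true} := by
    ext ω; simp
  rw [hT, digraphMeasure, Measure.pi_pi_finset, prod_const]
  congr 1
  rw [PMF.toMeasure_apply_singleton _ _ (measurableSet_singleton _), PMF.bernoulli_apply,
    min_eq_left (Real.toNNReal_le_one.mpr hp)]
  rfl

lemma digraphMeasure_lt_card_arcsWithin_le (hp₀ : 0 ≤ p) (hp₁ : p ≤ 1) {t : ℝ} (ht : 0 ≤ t)
    (S : Finset (Fin n)) :
    digraphMeasure n p {ω | t < #((arcsWithin S).filter fun a => ω a = true)} ≤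
      ENNReal.ofReal ((#S * #S).choose (⌊t⌋₊ + 1) * p ^ (⌊t⌋₊ + 1)) := by
  set k := ⌊t⌋₊ + 1
  have hcover : {ω : ArcSpace n | t < #((arcsWithin S).filter fun a => ω a = true)} ⊆
      ⋃ T ∈ (arcsWithin S).powersetCard k, {ω | ∀ a ∈ T, ω a = true} := by
    intro ω hω
    obtain ⟨T, hTF, hT⟩ := exists_subset_card_eq (Nat.floor_lt ht |>.mpr hω)
    refine Set.mem_biUnion (mem_powersetCard.mpr ⟨hTF.trans (filter_subset _ _), hT⟩) ?_
    exact fun a ha => (mem_filter.mp (hTF ha)).2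
  calc digraphMeasure n p {ω | t < #((arcsWithin S).filter fun a => ω a = true)}
      ≤ ∑ T ∈ (arcsWithin S).powersetCard k, digraphMeasure n p {ω | ∀ a ∈ T, ω a = true} :=
        (measure_mono hcover).trans (measure_biUnion_finset_le _ _)
    _ = (#(arcsWithin S)).choose k * ENNReal.ofReal p ^ k := by
        rw [sum_congr rfl fun T hT => by
          rw [digraphMeasure_forall_eq_true hp₁, (mem_powersetCard.mp hT).2]]
        rw [sum_const, card_powersetCard, nsmul_eq_mul]
    _ ≤ (#S * #S).choose k * ENNReal.ofReal p ^ k := by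
        gcongr; exact card_arcsWithin_le S
    _ = ENNReal.ofReal ((#S * #S).choose k * p ^ k) := by
        rw [ENNReal.ofReal_mul (by positivity), ENNReal.ofReal_pow hp₀, ENNReal.ofReal_natCast]

lemma digraphMeasure_exists_dense_le (hp₀ : 0 ≤ p) (hp₁ : p ≤ 1) (P : ℕ → Prop)
    [DecidablePred P] (t : ℕ → ℝ) (ht : ∀ s, 0 ≤ t s) :
    digraphMeasure n p {ω | ∃ S : Finset (Fin n), P #S ∧
        t #S < #((DigraphOf ω).filter fun e => e.1 ∈ S ∧ e.2 ∈ S)} ≤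
      ENNReal.ofReal (∑ s ∈ range (n + 1) with P s,
        n.choose s * ((s * s).choose (⌊t s⌋₊ + 1) * p ^ (⌊t s⌋₊ + 1))) := by
  set b : ℕ → ℝ := fun s => (s * s).choose (⌊t s⌋₊ + 1) * p ^ (⌊t s⌋₊ + 1)
  have hb : ∀ s, 0 ≤ b s := fun s => by positivity
  have hcover : {ω : ArcSpace n | ∃ S : Finset (Fin n), P #S ∧
      t #S < #((DigraphOf ω).filter fun e => e.1 ∈ S ∧ e.2 ∈ S)} ⊆
      ⋃ S ∈ (univ : Finset (Fin n)).powerset.filter (P #·),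
        {ω | t #S < #((arcsWithin S).filter fun a => ω a = true)} := by
    rintro ω ⟨S, hPS, hS⟩
    rw [card_filter_digraphOf] at hS
    exact Set.mem_biUnion (mem_filter.mpr ⟨mem_powerset.mpr (subset_univ S), hPS⟩) hS
  calc _ ≤ ∑ S ∈ (univ : Finset (Fin n)).powerset.filter (P #·),
          digraphMeasure n p {ω | t #S < #((arcsWithin S).filter fun a => ω a = true)} :=
        (measure_mono hcover).trans (measure_biUnion_finset_le _ _)
    _ ≤ ∑ S ∈ (univ : Finset (Fin n)).powerset.filter (P #·), ENNReal.ofReal (b #S) :=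
        sum_le_sum fun S _ => digraphMeasure_lt_card_arcsWithin_le hp₀ hp₁ (ht _) S
    _ = ENNReal.ofReal (∑ S ∈ (univ : Finset (Fin n)).powerset, if P #S then b #S else 0) := by
        rw [ENNReal.ofReal_sum_of_nonneg fun S _ => by split_ifs <;> simp [hb], sum_filter]
        simp only [apply_ite ENNReal.ofReal, ENNReal.ofReal_zero]
    _ = _ := by
        rw [sum_powerset_apply_card (fun s => if P s then b s else 0), card_univ,
          Fintype.card_fin, sum_filter]
        simp only [nsmul_eq_mul, mul_ite, mul_zero, b]

end RandomDigraph

lemma sum_range_succ_le_exp {g : ℕ → ℝ} {x : ℝ} (N : ℕ) (h₀ : g 0 ≤ 0)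
    (h : ∀ s ∈ Icc 1 N, g s ≤ Real.exp (x - s)) : ∑ s ∈ range (N + 1), g s ≤ Real.exp x := by
  have hgeom : ∀ s : ℕ, Real.exp (x - (s + 1 : ℕ)) ≤ Real.exp x * (1 / 2) * (1 / 2) ^ s := by
    intro s
    rw [sub_eq_add_neg, Real.exp_add, mul_assoc, ← pow_succ',
      show -((s + 1 : ℕ) : ℝ) = (s + 1 : ℕ) * (-1) by ring, Real.exp_nat_mul]
    gcongr
    exact Real.exp_neg_one_lt_half.le
  calc ∑ s ∈ range (N + 1), g s = ∑ s ∈ range N, g (s + 1) + g 0 := sum_range_succ' g N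
    _ ≤ ∑ s ∈ range N, Real.exp x * (1 / 2) * (1 / 2) ^ s + 0 := by
        gcongr with s hs
        exact (h (s + 1) (by simp at hs ⊢; omega)).trans (hgeom s)
    _ ≤ Real.exp x := by
        rw [← mul_sum, add_zero]
        nlinarith [sum_geometric_two_le N, Real.exp_pos x]

lemma add_mul_le_neg_sq_half_sub {φ f s k a b : ℝ} (hφ : 0 < φ) (hab : a + b = 2 - Real.log φ)
    (hb : b ≤ -(1 + φ⁻¹ ^ 2)) (hφf : 1 ≤ φ * f) (hsf : φ * f ≤ s) (hk : φ * s * f ≤ k)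
    (hf : 4 + φ⁻¹ ^ 2 - Real.log φ ≤ (φ + φ⁻¹ / 2) * f) :
    s * a + k * b ≤ -f ^ 2 / 2 - s := by
  have hs : 0 ≤ s := by linarith
  have hf₀ : 0 ≤ f := by nlinarith
  have hkb : (k - s) * b ≤ (φ * s * f - s) * -(1 + φ⁻¹ ^ 2) := by
    have : 0 ≤ φ * s * f - s := by nlinarith
    nlinarith [sq_nonneg φ⁻¹]
  have hf2 : f ^ 2 ≤ s * f * φ⁻¹ := by
    have : f ≤ s * φ⁻¹ := by rw [← div_eq_mul_inv, le_div_iff₀ hφ]; linarith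
    nlinarith
  have hφφ : φ * φ⁻¹ = 1 := mul_inv_cancel₀ hφ.ne'
  have key : s * (4 + φ⁻¹ ^ 2 - Real.log φ - (φ + φ⁻¹ / 2) * f) ≤ 0 :=
    mul_nonpos_of_nonneg_of_nonpos hs (by linarith)
  have e : s * a + k * b = s * (2 - Real.log φ) + (k - s) * b := by
    rw [← hab]; ring
  rw [e]
  nlinarith

noncomputable def smallSetRatio (φ : ℝ) : ℝ := φ * Real.exp (-(2 + φ⁻¹ ^ 2))

lemma smallSetRatio_pos {φ : ℝ} (hφ : 0 < φ) : 0 < smallSetRatio φ := by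
  unfold smallSetRatio; positivity

lemma pow_eq_exp_mul_log {x : ℝ} (hx : 0 < x) (m : ℕ) : x ^ m = Real.exp (m * Real.log x) := by
  rw [← Real.log_pow, Real.exp_log (by positivity)]

lemma choose_mul_choose_mul_pow_le {φ p f : ℝ} {n s k : ℕ} (hφ : 0 < φ) (hs : 1 ≤ s)
    (hsn : (s : ℝ) ≤ smallSetRatio φ * n) (hk : φ * n * s * p ≤ k) (hfp : f ≤ n * p)
    (hφf : 1 ≤ φ * f) (hf : 4 + φ⁻¹ ^ 2 - Real.log φ ≤ (φ + φ⁻¹ / 2) * f) :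
    n.choose s * ((s * s).choose k * p ^ k) ≤ Real.exp (-f ^ 2 / 2 - s) := by
  rcases lt_or_ge (s * s) k with hks | hks
  · rw [Nat.choose_eq_zero_of_lt hks]; simp only [Nat.cast_zero, zero_mul, mul_zero]; positivity
  have hs₀ : (0 : ℝ) < s := mod_cast hs
  have hn₀ : (0 : ℝ) < n := pos_of_mul_pos_right (hs₀.trans_le hsn) (smallSetRatio_pos hφ).le
  have hf₀ : 0 < f := pos_of_mul_pos_right (one_pos.trans_le hφf) hφ.le
  have hp₀ : 0 < p := pos_of_mul_pos_right (hf₀.trans_le hfp) hn₀.le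
  have hk₀ : (0 : ℝ) < k := lt_of_lt_of_le (by positivity) hk
  have hks' : φ * n * s * p ≤ s * s := hk.trans (by exact_mod_cast hks)
  have hsf : φ * f ≤ s := by
    have : φ * n * p * s ≤ s * s := by linarith
    nlinarith [le_of_mul_le_mul_right this hs₀]
  have hkf : φ * s * f ≤ k := by nlinarith
  set a := Real.log (Real.exp 1 * n / s)
  set b := Real.log (Real.exp 1 * s / (φ * n))
  have hab : a + b = 2 - Real.log φ := by
    rw [← Real.log_mul (by positivity) (by positivity),
      show Real.exp 1 * n / s * (Real.exp 1 * s / (φ * n)) = Real.exp 2 / φ by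
        rw [show (2 : ℝ) = 1 + 1 by norm_num, Real.exp_add]; field_simp,
      Real.log_div (by positivity) hφ.ne', Real.log_exp]
  have hb : b ≤ -(1 + φ⁻¹ ^ 2) := by
    rw [← Real.log_exp (-(1 + φ⁻¹ ^ 2))]
    refine Real.log_le_log (by positivity) ?_
    rw [div_le_iff₀ (by positivity), show -(1 + φ⁻¹ ^ 2) = 1 + -(2 + φ⁻¹ ^ 2) by ring,
      Real.exp_add]
    unfold smallSetRatio at hsn
    nlinarith [Real.exp_pos 1]
  have hchoose_s : (n.choose s : ℝ) ≤ Real.exp (s * a) := by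
    rw [← pow_eq_exp_mul_log (by positivity)]; exact Nat.choose_le_exp_one_mul_div_pow n s
  have hchoose_k : ((s * s).choose k : ℝ) * p ^ k ≤ Real.exp (k * b) := by
    rw [← pow_eq_exp_mul_log (by positivity)]
    calc ((s * s).choose k : ℝ) * p ^ k ≤ (Real.exp 1 * (s * s : ℕ) / k) ^ k * p ^ k := by
          gcongr; exact Nat.choose_le_exp_one_mul_div_pow _ k
      _ = (Real.exp 1 * s * (s * p) / k) ^ k := by rw [← mul_pow]; push_cast; ring
      _ ≤ (Real.exp 1 * s / (φ * n)) ^ k := by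
          refine pow_le_pow_left₀ (by positivity) ?_ k
          rw [div_le_div_iff₀ hk₀ (by positivity)]
          have := mul_le_mul_of_nonneg_left hk (by positivity : 0 ≤ Real.exp 1 * s)
          linarith
  calc (n.choose s : ℝ) * ((s * s).choose k * p ^ k) ≤ Real.exp (s * a) * Real.exp (k * b) := by
        gcongr
    _ = Real.exp (s * a + k * b) := (Real.exp_add _ _).symm
    _ ≤ Real.exp (-f ^ 2 / 2 - s) :=
        Real.exp_le_exp.mpr (add_mul_le_neg_sq_half_sub hφ hab hb hφf hsf hkf hf)

/-- Sets that are not too large induce few arcs in `D(n,p)`. -/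
theorem stmt12 (f : ℕ → ℝ) (hf : Tendsto f atTop atTop) (φ : ℝ) (hφ : 0 < φ) :
    ∃ ζ : ℝ, 0 < ζ ∧ ∀ p : ℕ → ℝ,
      (∀ n, f n / n ≤ p n ∧ p n ≤ 1) →
      ∀ᶠ n in atTop,
        digraphMeasure n (p n)
          {ω : ArcSpace n | ∃ S : Finset (Fin n), (S.card : ℝ) ≤ ζ * n ∧
            (φ * n * S.card * p n <
              (((DigraphOf ω).filter fun e => e.1 ∈ S ∧ e.2 ∈ S).card : ℝ))}
        ≤ ENNReal.ofReal (Real.exp (-(f n) ^ 2 / 2)) := by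
  refine ⟨smallSetRatio φ, smallSetRatio_pos hφ, fun p hp => ?_⟩
  filter_upwards [eventually_gt_atTop 0, hf.eventually_ge_atTop φ⁻¹,
    hf.eventually_ge_atTop ((4 + φ⁻¹ ^ 2 - Real.log φ) / (φ + φ⁻¹ / 2))] with n hn hφf hfn
  obtain ⟨hfp, hp₁⟩ := hp n
  have hn₀ : (0 : ℝ) < n := mod_cast hn
  rw [div_le_iff₀ hn₀, mul_comm] at hfp
  rw [inv_le_iff_one_le_mul₀' hφ] at hφf
  rw [div_le_iff₀ (by positivity), mul_comm] at hfn
  have hp₀ : 0 ≤ p n := nonneg_of_mul_nonneg_right (by nlinarith) hn₀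
  refine (digraphMeasure_exists_dense_le hp₀ hp₁ (fun s => (s : ℝ) ≤ smallSetRatio φ * n)
    (fun s => φ * n * s * p n) fun s => by positivity).trans (ENNReal.ofReal_le_ofReal ?_)
  rw [sum_filter]
  refine sum_range_succ_le_exp n (by simp) fun s hs => ?_
  split_ifs with hsn
  · exact choose_mul_choose_mul_pow_le hφ (mem_Icc.mp hs).1 hsn
      (mod_cast (Nat.lt_floor_add_one _).le) hfp hφf hfn
  · positivity
end

section
/- If p = p(n) = (log n − h(n))/(n−1) with h(n) → ∞, then a.a.s. D(n,p) contains at least two vertices of in-degree zero, and consequently λ(D(n,p)) = 0 and D(n,p) contains no arborescence. -/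
/-!
A vertex of `D(n,p)` is a source (in-degree `0`) iff none of its `n - 1` possible in-arcs is
present. In-arc sets of distinct vertices are disjoint, so the sources are independent and
their number is `Bin(n, q)` with `q = (1 - p)^(n-1)`. Hence fewer than two sources occur with
probability `(1 - q)^n + n q (1 - q)^(n-1) = (1 + T)(1 - q)^(n-1) ≤ (1 + T) e^(-T)`,
where `T = (n - 1) q`; and `T ≥ e^(h - 1) / 2 → ∞` since `(n - 1) p = log n - h`.
Two sources make the defining condition of `λ` fail at `ℓ = 1`, and rule out an arborescence,
in which only the root has in-degree `0`.
-/

open Finset MeasureTheory Filter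

/-- Number of vertices of in-degree exactly `i`. -/
def Yk {V : Type*} [Fintype V] [DecidableEq V] (A : Finset (V × V)) (i : ℕ) : ℕ :=
  (Finset.univ.filter fun v => inDegD A v = i).card

/-- `λ(D)`. -/
noncomputable def lambdaD {V : Type*} [Fintype V] [DecidableEq V]
    (A : Finset (V × V)) : ℕ :=
  sSup {l : ℕ | ∀ k ≤ l, ∑ i ∈ range k, (k - i) * Yk A i ≤ k}

/-- `B` is an arborescence of the digraph with arc set `A`. -/
def IsArborescence {V : Type*} [Fintype V] [DecidableEq V]
    (A B : Finset (V × V)) : Prop :=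
  B ⊆ A ∧ ∃ r : V, inDegD B r = 0 ∧ (∀ v, v ≠ r → inDegD B v = 1) ∧
    ∀ v : V, Relation.ReflTransGen (fun x y => (x, y) ∈ B) r v


open scoped NNReal ENNReal Topology

section Fibres

variable {ι β : Type*} [Fintype ι] [Fintype β] [DecidableEq β] {α : ι → Type*}
  [∀ i, MeasurableSpace (α i)] (μ : ∀ i, Measure (α i)) [∀ i, IsProbabilityMeasure (μ i)]

theorem measurePreserving_piCurry_pi {κ : ι → Type*} [∀ i, Fintype (κ i)]
    {X : ∀ i, κ i → Type*} [∀ i j, MeasurableSpace (X i j)]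
    (ν : ∀ i j, Measure (X i j)) [∀ i j, IsProbabilityMeasure (ν i j)] :
    MeasurePreserving (MeasurableEquiv.piCurry X) (Measure.pi fun q : Σ i, κ i => ν q.1 q.2)
      (Measure.pi fun i => Measure.pi (ν i)) := by
  refine ⟨(MeasurableEquiv.piCurry X).measurable, ?_⟩
  simpa only [Measure.infinitePi_eq_pi] using Measure.infinitePi_map_piCurry ν

theorem measure_pi_forall_restrict_fibre_mem (g : ι → β)
    (C : ∀ b, Set (∀ i : {i // g i = b}, α i)) (hC : ∀ b, MeasurableSet (C b)) :
    Measure.pi μ {f | ∀ b, (fun i : {i // g i = b} => f i) ∈ C b}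
      = ∏ b, Measure.pi (fun i : {i // g i = b} => μ i) (C b) := by
  have hmp := (measurePreserving_piCongrLeft μ (Equiv.sigmaFiberEquiv g)).symm.trans
    (measurePreserving_piCurry_pi fun b (i : {i // g i = b}) => μ i)
  rw [← Measure.pi_pi, ← hmp.measure_preimage (MeasurableSet.univ_pi hC).nullMeasurableSet]
  congr 1
  ext f
  simp only [Set.mem_preimage, Set.mem_pi, Set.mem_univ, true_implies, Set.mem_ofPred_eq]
  rfl

end Fibres

def HasTwoSources {V : Type*} [Fintype V] [DecidableEq V] (A : Finset (V × V)) : Prop :=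
  ∃ u v : V, u ≠ v ∧ inDegD A u = 0 ∧ inDegD A v = 0

section Deterministic

variable {V : Type*} [Fintype V] [DecidableEq V] {A : Finset (V × V)}

theorem inDegD_mono {B : Finset (V × V)} (hBA : B ⊆ A) (v : V) : inDegD B v ≤ inDegD A v :=
  Finset.card_le_card (Finset.filter_subset_filter _ hBA)

theorem HasTwoSources.two_le_Yk_zero (hA : HasTwoSources A) : 2 ≤ Yk A 0 := by
  obtain ⟨u, v, huv, hu, hv⟩ := hA
  rw [← Finset.card_pair huv]
  refine Finset.card_le_card fun w hw => ?_
  rcases Finset.mem_insert.1 hw with rfl | hw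
  · simpa
  · rw [Finset.mem_singleton.1 hw]; simpa

theorem lambdaD_eq_zero_of_two_le_Yk_zero (h2 : 2 ≤ Yk A 0) : lambdaD A = 0 := by
  refine Nat.le_zero.1 (csSup_le' fun l hl => Nat.le_zero.2 ?_)
  by_contra hl0
  have h1 := hl 1 (Nat.one_le_iff_ne_zero.2 hl0)
  rw [Finset.sum_range_one] at h1
  omega

theorem HasTwoSources.not_isArborescence (hA : HasTwoSources A) (B : Finset (V × V)) :
    ¬ IsArborescence A B := by
  rintro ⟨hBA, r, -, hone, -⟩
  obtain ⟨u, v, huv, hu, hv⟩ := hA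
  obtain ⟨w, hwr, hw⟩ : ∃ w, w ≠ r ∧ inDegD A w = 0 := by
    by_cases hur : u = r
    · exact ⟨v, fun hvr => huv (hur.trans hvr.symm), hv⟩
    · exact ⟨u, hur, hu⟩
  have := inDegD_mono hBA w
  rw [hone w hwr, hw] at this
  omega

end Deterministic

section RandomDigraph

variable {n : ℕ}

def inArcs (ω : ArcSpace n) (v : Fin n) : {a : ArcIdx n // a.1.2 = v} → Bool := fun a => ω a

theorem inDegD_digraphOf_eq_zero_iff (ω : ArcSpace n) (v : Fin n) :
    inDegD (DigraphOf ω) v = 0 ↔ inArcs ω v = fun _ => false := by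
  simp only [inDegD, DigraphOf, Finset.card_eq_zero, Finset.filter_eq_empty_iff,
    Finset.mem_image, Finset.mem_filter, Finset.mem_univ, true_and, funext_iff, inArcs]
  constructor
  · intro h a
    by_contra hb
    exact h ⟨a.1, Bool.not_eq_false _ ▸ hb, rfl⟩ a.2
  · rintro h _ ⟨a, ha, rfl⟩ hav
    simp [h ⟨a, hav⟩] at ha

def inArcsEquiv (v : Fin n) : {a : ArcIdx n // a.1.2 = v} ≃ {u : Fin n // u ≠ v} where
  toFun a := ⟨a.1.1.1, fun h => a.1.2 (h.trans a.2.symm)⟩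
  invFun u := ⟨⟨(u.1, v), u.2⟩, rfl⟩
  left_inv := by rintro ⟨⟨⟨u, w⟩, huw⟩, rfl⟩; rfl
  right_inv _ := rfl

theorem card_inArcs (v : Fin n) : Fintype.card {a : ArcIdx n // a.1.2 = v} = n - 1 := by
  simp [Fintype.card_congr (inArcsEquiv v), Fintype.card_subtype_compl]

noncomputable def arcLaw (p : ℝ) : Measure Bool :=
  (PMF.bernoulli (min p.toNNReal 1) (min_le_right _ _)).toMeasure

instance (p : ℝ) : IsProbabilityMeasure (arcLaw p) := by
  unfold arcLaw; infer_instance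

theorem digraphMeasure_eq_pi (p : ℝ) : digraphMeasure n p = Measure.pi fun _ => arcLaw p := rfl

instance (p : ℝ) : IsProbabilityMeasure (digraphMeasure n p) := by
  rw [digraphMeasure_eq_pi]; infer_instance

def sourceProb (n : ℕ) (p : ℝ) : ℝ≥0 := (1 - min p.toNNReal 1) ^ (n - 1)

theorem sourceProb_le_one (n : ℕ) (p : ℝ) : sourceProb n p ≤ 1 :=
  pow_le_one₀ bot_le tsub_le_self

theorem coe_sourceProb_of_nonpos {p : ℝ} (hp : p ≤ 0) (n : ℕ) :
    (sourceProb n p : ℝ) = 1 := by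
  simp [sourceProb, Real.toNNReal_of_nonpos hp]

theorem coe_sourceProb_of_le_one {p : ℝ} (hp0 : 0 ≤ p) (hp1 : p ≤ 1) (n : ℕ) :
    (sourceProb n p : ℝ) = (1 - p) ^ (n - 1) := by
  have hmin : min p.toNNReal 1 = p.toNNReal := min_eq_left (Real.toNNReal_le_one.2 hp1)
  rw [sourceProb, hmin, NNReal.coe_pow, NNReal.coe_sub (Real.toNNReal_le_one.2 hp1),
    NNReal.coe_one, Real.coe_toNNReal _ hp0]

theorem measure_inArcs_eq_false (p : ℝ) (v : Fin n) :
    Measure.pi (fun _ : {a : ArcIdx n // a.1.2 = v} => arcLaw p) {fun _ => false}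
      = sourceProb n p := by
  rw [Measure.pi_singleton, Finset.prod_const, Finset.card_univ, card_inArcs, arcLaw,
    PMF.toMeasure_apply_singleton _ _ (measurableSet_singleton _)]
  simp [sourceProb, PMF.bernoulli]

theorem measure_sources_eq (p : ℝ) (S : Finset (Fin n)) :
    digraphMeasure n p {ω | ∀ v, inDegD (DigraphOf ω) v = 0 ↔ v ∈ S}
      = (sourceProb n p : ℝ≥0∞) ^ #S * (1 - sourceProb n p) ^ (n - #S) := by
  let C v : Set ({a : ArcIdx n // a.1.2 = v} → Bool) :=
    if v ∈ S then {fun _ => false} else {fun _ => false}ᶜ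
  have hevent : {ω : ArcSpace n | ∀ v, inDegD (DigraphOf ω) v = 0 ↔ v ∈ S}
      = {ω | ∀ v, inArcs ω v ∈ C v} := by
    ext ω
    refine forall_congr' fun v => ?_
    rw [inDegD_digraphOf_eq_zero_iff]
    by_cases hv : v ∈ S <;> simp [C, hv]
  rw [hevent, digraphMeasure_eq_pi]
  refine (measure_pi_forall_restrict_fibre_mem (α := fun _ => Bool) _
    (fun a : ArcIdx n => a.1.2) C fun _ => (Set.toFinite _).measurableSet).trans ?_
  have hfactor v : Measure.pi (fun _ => arcLaw p) (C v)
      = if v ∈ S then (sourceProb n p : ℝ≥0∞) else 1 - sourceProb n p := by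
    by_cases hv : v ∈ S
    · simp only [C, hv, if_true, measure_inArcs_eq_false]
    · simp only [C, hv, if_false, prob_compl_eq_one_sub (measurableSet_singleton _),
        measure_inArcs_eq_false]
  rw [Finset.prod_congr rfl fun v _ => hfactor v, Finset.prod_ite, Finset.prod_const,
    Finset.prod_const]
  simp [Finset.filter_not, Finset.card_univ_sdiff]

theorem measure_not_hasTwoSources_le (p : ℝ) :
    digraphMeasure n p {ω | ¬ HasTwoSources (DigraphOf ω)}
      ≤ (1 - sourceProb n p) ^ n + n * (sourceProb n p * (1 - sourceProb n p) ^ (n - 1)) := by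
  have hsub : {ω : ArcSpace n | ¬ HasTwoSources (DigraphOf ω)}
      ⊆ {ω | ∀ v, inDegD (DigraphOf ω) v = 0 ↔ v ∈ (∅ : Finset (Fin n))}
        ∪ ⋃ u, {ω | ∀ v, inDegD (DigraphOf ω) v = 0 ↔ v ∈ ({u} : Finset (Fin n))} := by
    intro ω hω
    by_cases hsrc : ∃ u, inDegD (DigraphOf ω) u = 0
    · obtain ⟨u, hu⟩ := hsrc
      refine Or.inr (Set.mem_iUnion.2 ⟨u, fun v => ?_⟩)
      rw [Finset.mem_singleton]
      refine ⟨fun hv => ?_, fun hvu => hvu ▸ hu⟩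
      by_contra hvu
      exact hω ⟨v, u, hvu, hv, hu⟩
    · exact Or.inl fun v => by simp [not_exists.1 hsrc v]
  calc _ ≤ _ := measure_mono hsub
    _ ≤ _ := measure_union_le _ _
    _ ≤ _ := add_le_add_right (measure_iUnion_fintype_le _ _) _
    _ = _ := by simp only [measure_sources_eq]; simp

end RandomDigraph

open Real

-- The left side is `P(Bin(m + 1, q) ≤ 1)`.
theorem one_sub_pow_add_mul_le (q : ℝ) (hq0 : 0 ≤ q) (hq1 : q ≤ 1) (m : ℕ) :
    (1 - q) ^ (m + 1) + (m + 1) * (q * (1 - q) ^ m) ≤ (1 + m * q) * exp (-(m * q)) := by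
  have hexp : (1 - q) ^ m ≤ exp (-(m * q)) := by
    calc (1 - q) ^ m ≤ exp (-q) ^ m := pow_le_pow_left₀ (by linarith) (one_sub_le_exp_neg q) m
      _ = exp (-(m * q)) := by rw [← exp_nat_mul]; ring_nf
  calc (1 - q) ^ (m + 1) + (m + 1) * (q * (1 - q) ^ m) = (1 + m * q) * (1 - q) ^ m := by ring
    _ ≤ _ := mul_le_mul_of_nonneg_left hexp (by positivity)

theorem tendsto_one_add_mul_exp_neg_atTop :
    Tendsto (fun t => (1 + t) * exp (-t)) atTop (𝓝 0) := by
  have h := tendsto_exp_neg_atTop_nhds_zero.add (tendsto_pow_mul_exp_neg_atTop_nhds_zero 1)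
  simpa [add_mul] using h

theorem exp_neg_add_two_mul_sq_le_one_sub {x : ℝ} (hx : x ≤ 1 / 2) :
    exp (-(x + 2 * x ^ 2)) ≤ 1 - x := by
  have hpos : 0 < 1 - x := by linarith
  have hlog := one_sub_inv_le_log_of_pos hpos
  have hinv : (1 - x)⁻¹ ≤ 1 + x + 2 * x ^ 2 := by
    rw [inv_le_iff_one_le_mul₀ hpos]; nlinarith
  calc exp (-(x + 2 * x ^ 2)) ≤ exp (log (1 - x)) := exp_le_exp.2 (by linarith)
    _ = 1 - x := exp_log hpos

theorem min_le_mul_sourceProb {m : ℕ} (hm : 2 ≤ m) (hlog : 2 * log (m + 1) ^ 2 ≤ m)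
    {H : ℝ} (hH : 0 ≤ H) :
    min (m : ℝ) (exp (H - 1) / 2) ≤ m * sourceProb (m + 1) ((log (m + 1) - H) / m) := by
  set L := log (m + 1)
  set x := (L - H) / m
  have hm2 : (2 : ℝ) ≤ m := by exact_mod_cast hm
  rcases le_or_gt x 0 with hx | hx
  · simp [coe_sourceProb_of_nonpos hx]
  have hL : 0 ≤ L := log_nonneg (by linarith)
  have hmx : m * x = L - H := mul_div_cancel₀ _ (by positivity)
  have hxL : x ≤ L / m := div_le_div_of_nonneg_right (by linarith) (by positivity)
  have hx2 : x ≤ 1 / 2 := by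
    refine hxL.trans ?_
    rw [div_le_div_iff₀ (by linarith) two_pos]; nlinarith
  have hmx2 : (L - H) * x ≤ 1 / 2 := by
    calc (L - H) * x ≤ L * (L / m) := by gcongr; linarith
      _ ≤ 1 / 2 := by rw [← mul_div_assoc, div_le_iff₀ (by linarith)]; nlinarith
  have hpow : exp (H - L - 1) ≤ (1 - x) ^ m :=
    calc exp (H - L - 1) ≤ exp (-(x + 2 * x ^ 2)) ^ m := by
          rw [← exp_nat_mul, exp_le_exp]; nlinarith
      _ ≤ (1 - x) ^ m :=
          pow_le_pow_left₀ (exp_pos _).le (exp_neg_add_two_mul_sq_le_one_sub hx2) m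
  have hsplit : exp (H - L - 1) = exp (H - 1) / (m + 1) := by
    rw [sub_right_comm, exp_sub, exp_log (by linarith)]
  calc min (m : ℝ) (exp (H - 1) / 2) ≤ exp (H - 1) / 2 := min_le_right _ _
    _ ≤ m * (exp (H - 1) / (m + 1)) := by
        rw [mul_div_assoc', le_div_iff₀ (by linarith)]; nlinarith [exp_pos (H - 1)]
    _ ≤ m * sourceProb (m + 1) x := by
        rw [coe_sourceProb_of_le_one hx.le (by linarith), Nat.add_sub_cancel, ← hsplit]
        gcongr

theorem eventually_two_mul_log_sq_le :
    ∀ᶠ m : ℕ in atTop, 2 * log (m + 1) ^ 2 ≤ m := by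
  have hto : Tendsto (fun m : ℕ => (m : ℝ) + 1) atTop atTop :=
    tendsto_atTop_add_const_right _ 1 tendsto_natCast_atTop_atTop
  have hsmall := (isLittleO_pow_log_id_atTop (n := 2)).bound (c := 1 / 4) (by norm_num)
  filter_upwards [hto.eventually hsmall, eventually_ge_atTop 1] with m hm hm1
  have : (1 : ℝ) ≤ m := by exact_mod_cast hm1
  simp only [id, Real.norm_eq_abs] at hm
  rw [abs_of_nonneg (by positivity), abs_of_nonneg (by positivity)] at hm
  linarith

theorem tendsto_mul_sourceProb_atTop (h p : ℕ → ℝ) (hh : Tendsto h atTop atTop)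
    (hp : ∀ᶠ n in atTop, p n = (log n - h n) / (n - 1)) :
    Tendsto (fun m : ℕ => (m : ℝ) * sourceProb (m + 1) (p (m + 1))) atTop atTop := by
  have hh' : Tendsto (fun m => h (m + 1)) atTop atTop := hh.comp (tendsto_add_atTop_nat 1)
  have hp' : ∀ᶠ m : ℕ in atTop, p (m + 1) = (log (m + 1) - h (m + 1)) / m := by
    filter_upwards [(tendsto_add_atTop_nat 1).eventually hp] with m hm
    simpa using hm
  have hmin : Tendsto (fun m : ℕ => min (m : ℝ) (exp (h (m + 1) - 1) / 2)) atTop atTop :=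
    tendsto_inf_atTop _ tendsto_natCast_atTop_atTop
      ((tendsto_exp_atTop.comp (tendsto_atTop_add_const_right _ (-1) hh')).atTop_div_const two_pos)
  refine tendsto_atTop_mono' _ ?_ hmin
  filter_upwards [hp', eventually_two_mul_log_sq_le, eventually_ge_atTop 2,
    hh'.eventually_ge_atTop 0] with m hpm hlog hm hH
  rw [hpm]
  exact min_le_mul_sourceProb hm hlog hH

theorem tendsto_measure_not_hasTwoSources (h p : ℕ → ℝ) (hh : Tendsto h atTop atTop)
    (hp : ∀ᶠ n in atTop, p n = (log n - h n) / (n - 1)) :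
    Tendsto (fun n => digraphMeasure n (p n) {ω | ¬ HasTwoSources (DigraphOf ω)})
      atTop (𝓝 0) := by
  rw [← tendsto_add_atTop_iff_nat 1]
  set T := fun m : ℕ => (m : ℝ) * sourceProb (m + 1) (p (m + 1))
  have hlim : Tendsto (fun m => ENNReal.ofReal ((1 + T m) * exp (-T m))) atTop (𝓝 0) := by
    simpa using ENNReal.tendsto_ofReal
      (tendsto_one_add_mul_exp_neg_atTop.comp (tendsto_mul_sourceProb_atTop h p hh hp))
  refine tendsto_of_tendsto_of_tendsto_of_le_of_le tendsto_const_nhds hlim (fun _ => bot_le)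
    fun m => (measure_not_hasTwoSources_le _).trans ?_
  set q := sourceProb (m + 1) (p (m + 1))
  have hq : q ≤ 1 := sourceProb_le_one _ _
  have hcoe :
      (1 - (q : ℝ≥0∞)) ^ (m + 1) + ((m + 1 : ℕ) : ℝ≥0∞) * (q * (1 - q) ^ (m + 1 - 1))
        = ENNReal.ofReal ((1 - q) ^ (m + 1) + (m + 1) * (q * (1 - q) ^ m)) := by
    have hreal : ((1 - q) ^ (m + 1) + (m + 1) * (q * (1 - q) ^ m) : ℝ)
        = (((1 - q) ^ (m + 1) + (m + 1) * (q * (1 - q) ^ m) : ℝ≥0) : ℝ) := by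
      push_cast [NNReal.coe_sub hq]
      ring
    rw [hreal, ENNReal.ofReal_coe_nnreal]
    push_cast [ENNReal.coe_sub]
    rfl
  rw [hcoe]
  exact ENNReal.ofReal_le_ofReal (one_sub_pow_add_mul_le q q.2 hq m)

/-- If `p = (log n - h(n))/(n-1)` with `h(n) → ∞`, then a.a.s. `D(n,p)` has at
least two vertices of in-degree zero; consequently `λ = 0` and there is no
arborescence. -/
theorem stmt16 (h p : ℕ → ℝ) (hh : Tendsto h atTop atTop)
    (hp : ∀ᶠ n in atTop, p n = (Real.log n - h n) / (n - 1)) :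
    Tendsto (fun n => digraphMeasure n (p n)
        {ω : ArcSpace n |
          (∃ u v : Fin n, u ≠ v ∧ inDegD (DigraphOf ω) u = 0 ∧
            inDegD (DigraphOf ω) v = 0) ∧
          lambdaD (DigraphOf ω) = 0 ∧
          ∀ B : Finset (Fin n × Fin n), ¬ IsArborescence (DigraphOf ω) B})
      atTop (nhds 1) := by
  have htwo : Tendsto (fun n => digraphMeasure n (p n) {ω | HasTwoSources (DigraphOf ω)})
      atTop (𝓝 1) := by
    have hcompl := ENNReal.Tendsto.sub tendsto_const_nhds
      (tendsto_measure_not_hasTwoSources h p hh hp) (Or.inl ENNReal.one_ne_top)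
    rw [tsub_zero] at hcompl
    refine hcompl.congr fun n => ?_
    rw [← prob_compl_eq_one_sub (Set.toFinite _).measurableSet, Set.compl_ofPred]
    simp_rw [not_not]
  refine tendsto_of_tendsto_of_tendsto_of_le_of_le htwo tendsto_const_nhds
    (fun n => measure_mono fun ω hω => ?_) fun _ => prob_le_one
  exact ⟨hω, lambdaD_eq_zero_of_two_le_Yk_zero hω.two_le_Yk_zero, hω.not_isArborescence⟩
end
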